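/- In Λ*(ℝ^{2n+1}) with α = e^{2n+1}, F = e^{12}+⋯+e^{2n-1,2n}, Ω = (e^1+ie^2)⋯(e^{2n-1}+ie^{2n}), the map f defined by f(α) = λF, f(F) = 0, f(Ω) = -iμ α∧Ω (λ, μ real constants), extended by the graded Leibniz rule on the invariant subalgebra, satisfies f² = 0. -/
import Mathlib


/-!
STATEMENT 9: In Λ*(ℝ^{2n+1}) with α = e^{2n+1}, F = e^{12}+⋯+e^{2n-1,2n},
Ω = Ω⁺+iΩ⁻ = (e^1+ie^2)⋯(e^{2n-1}+ie^{2n}), the operator f with f(α) = λF,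
f(F) = 0, f(Ω) = -iμ α∧Ω (i.e. f(Ω⁺) = μ α∧Ω⁻, f(Ω⁻) = -μ α∧Ω⁺), extended by the
graded Leibniz rule, satisfies f² = 0 (case (B) of Proposition 9,
α-Einstein-Sasaki geometry).
-/

noncomputable section
open ExteriorAlgebra

abbrev Λo (n : ℕ) : Type := ExteriorAlgebra ℝ (Fin (2 * n + 1) → ℝ)

def e (n : ℕ) (i : Fin (2 * n + 1)) : Λo n := ι ℝ (Pi.single i 1)

def α (n : ℕ) : Λo n := e n ⟨2 * n, by omega⟩

def F (n : ℕ) : Λo n :=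
  ∑ i : Fin n, e n ⟨2 * i.1, by have := i.2; omega⟩ *
    e n ⟨2 * i.1 + 1, by have := i.2; omega⟩

def ΩTerm (n : ℕ) (S : Finset (Fin n)) : Λo n :=
  (List.ofFn fun i : Fin n =>
    if i ∈ S then e n ⟨2 * i.1 + 1, by have := i.2; omega⟩
    else e n ⟨2 * i.1, by have := i.2; omega⟩).prod

def Ωp (n : ℕ) : Λo n := ∑ S : Finset (Fin n), (Complex.I ^ S.card).re • ΩTerm n S

def Ωm (n : ℕ) : Λo n := ∑ S : Finset (Fin n), (Complex.I ^ S.card).im • ΩTerm n S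

theorem stmt9 (n : ℕ) (hn : 1 ≤ n) (lam mu : ℝ) (f : Λo n →ₗ[ℝ] Λo n)
    (hα : f (α n) = lam • F n)
    (hF : f (F n) = 0)
    (hΩp : f (Ωp n) = mu • (α n * Ωm n))
    (hΩm : f (Ωm n) = (-mu) • (α n * Ωp n))
    (hL1 : f (α n * Ωp n) = f (α n) * Ωp n - α n * f (Ωp n))
    (hL2 : f (α n * Ωm n) = f (α n) * Ωm n - α n * f (Ωm n)) :
    f (f (α n)) = 0 ∧ f (f (F n)) = 0 ∧ f (f (Ωp n)) = 0 ∧ f (f (Ωm n)) = 0 := by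
  have hFΩ : ∀ S : Finset (Fin n), F n * ΩTerm n S = 0 := by
    intro S
    have hterm : ΩTerm n S = (List.ofFn fun i : Fin n =>
        ι ℝ (if i ∈ S then (Pi.single (⟨2 * i.1 + 1, by have := i.2; omega⟩ :
              Fin (2 * n + 1)) 1 : Fin (2 * n + 1) → ℝ)
            else Pi.single (⟨2 * i.1, by have := i.2; omega⟩ : Fin (2 * n + 1)) 1)).prod := by
      unfold ΩTerm e
      simp only [apply_ite (ι ℝ)]
    set g : Fin n → (Fin (2 * n + 1) → ℝ) := fun i =>
      if i ∈ S then (Pi.single (⟨2 * i.1 + 1, by have := i.2; omega⟩ :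
          Fin (2 * n + 1)) 1 : Fin (2 * n + 1) → ℝ)
      else Pi.single (⟨2 * i.1, by have := i.2; omega⟩ : Fin (2 * n + 1)) 1 with hg
    have hmul : ∀ i : Fin n, ι ℝ (g i) * ΩTerm n S = 0 := by
      intro i
      rw [hterm]
      exact ExteriorAlgebra.ι_mul_prod_list g i
    unfold F
    rw [Finset.sum_mul]
    refine Finset.sum_eq_zero fun i _ => ?_
    by_cases hi : i ∈ S
    · have : e n ⟨2 * i.1 + 1, by have := i.2; omega⟩ * ΩTerm n S = 0 := by
        have := hmul i
        rw [hg] at this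
        simpa [hi, e] using this
      rw [mul_assoc, this, mul_zero]
    · have h0 : e n ⟨2 * i.1, by have := i.2; omega⟩ * ΩTerm n S = 0 := by
        have := hmul i
        rw [hg] at this
        simpa [hi, e] using this
      have hsw : e n ⟨2 * i.1, by have := i.2; omega⟩ *
          e n ⟨2 * i.1 + 1, by have := i.2; omega⟩ =
          -(e n ⟨2 * i.1 + 1, by have := i.2; omega⟩ *
            e n ⟨2 * i.1, by have := i.2; omega⟩) := by
        have := ExteriorAlgebra.ι_add_mul_swap (R := ℝ)
          ((Pi.single (⟨2 * i.1, by have := i.2; omega⟩ : Fin (2 * n + 1)) 1 :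
            Fin (2 * n + 1) → ℝ))
          ((Pi.single (⟨2 * i.1 + 1, by have := i.2; omega⟩ : Fin (2 * n + 1)) 1 :
            Fin (2 * n + 1) → ℝ))
        unfold e
        exact eq_neg_of_add_eq_zero_left this
      rw [hsw, neg_mul, mul_assoc, h0, mul_zero, neg_zero]
  have hFΩp : F n * Ωp n = 0 := by
    unfold Ωp
    rw [Finset.mul_sum]
    exact Finset.sum_eq_zero fun S _ => by rw [mul_smul_comm, hFΩ S, smul_zero]
  have hFΩm : F n * Ωm n = 0 := by
    unfold Ωm
    rw [Finset.mul_sum]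
    exact Finset.sum_eq_zero fun S _ => by rw [mul_smul_comm, hFΩ S, smul_zero]
  have hαα : α n * α n = 0 := ExteriorAlgebra.ι_sq_zero _
  have hααp : α n * (α n * Ωp n) = 0 := by rw [← mul_assoc, hαα, zero_mul]
  have hααm : α n * (α n * Ωm n) = 0 := by rw [← mul_assoc, hαα, zero_mul]
  refine ⟨?_, ?_, ?_, ?_⟩
  · rw [hα, map_smul, hF, smul_zero]
  · rw [hF, map_zero]
  · rw [hΩp, map_smul, hL2, hα, hΩm, smul_mul_assoc, hFΩm, smul_zero, zero_sub,
      mul_smul_comm, hααp, smul_zero, neg_zero, smul_zero]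
  · rw [hΩm, map_smul, hL1, hα, hΩp, smul_mul_assoc, hFΩp, smul_zero, zero_sub,
      mul_smul_comm, hααm, smul_zero, neg_zero, smul_zero]
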